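/- Let W be the ℂ-linear span, inside the complex matrices indexed by Fin d × Fin d, of the set {I_d ⊗ₖ M : M an arbitrary d×d complex matrix} ∪ {Z^a ⊗ₖ T : 1 ≤ a ≤ d−1, T a d×d complex matrix with trace T = 0}. Then Z ⊗ₖ I_d ∉ W. (This shows the non-commutative graph of the channel N_d does not contain Z ⊗ I.) -/
import Mathlib

open Matrix Kronecker

/-- The diagonal matrix Z with Z[j,j] = ω^j, ω = exp(2πi/d). -/
noncomputable def Zmat (d : ℕ) : Matrix (Fin d) (Fin d) ℂ :=
  Matrix.diagonal fun j => Complex.exp (2 * Real.pi * Complex.I / d) ^ (j : ℕ)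

/-- The span W of {I ⊗ M} ∪ {Zᵃ ⊗ T : 1 ≤ a ≤ d−1, tr T = 0}. -/
noncomputable def Wspan (d : ℕ) : Submodule ℂ (Matrix (Fin d × Fin d) (Fin d × Fin d) ℂ) :=
  Submodule.span ℂ
    ({X | ∃ M : Matrix (Fin d) (Fin d) ℂ, X = (1 : Matrix (Fin d) (Fin d) ℂ) ⊗ₖ M} ∪
     {X | ∃ a : ℕ, 1 ≤ a ∧ a ≤ d - 1 ∧
        ∃ T : Matrix (Fin d) (Fin d) ℂ, T.trace = 0 ∧ X = ((Zmat d) ^ a) ⊗ₖ T})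

noncomputable def phiMap (d : ℕ) :
    Matrix (Fin d × Fin d) (Fin d × Fin d) ℂ →ₗ[ℂ] ℂ where
  toFun X := ∑ p : Fin d × Fin d,
    Complex.exp (2 * Real.pi * Complex.I / d) ^ ((d - 1) * (p.1 : ℕ)) * X p p
  map_add' X Y := by
    simp [mul_add, Finset.sum_add_distrib]
  map_smul' c X := by
    simp only [Matrix.smul_apply, smul_eq_mul, RingHom.id_apply, Finset.mul_sum]
    exact Finset.sum_congr rfl (by intros; ring)

lemma phi_kron (d : ℕ) (A B : Matrix (Fin d) (Fin d) ℂ) :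
    phiMap d (A ⊗ₖ B) =
      (∑ j : Fin d,
        Complex.exp (2 * Real.pi * Complex.I / d) ^ ((d - 1) * (j : ℕ)) * A j j) * B.trace := by
  simp only [phiMap, LinearMap.coe_mk, AddHom.coe_mk, Matrix.trace, Matrix.diag,
    Finset.sum_mul_sum, Fintype.sum_prod_type, kroneckerMap_apply]
  exact Finset.sum_congr rfl fun j _ => Finset.sum_congr rfl fun k _ => by ring

/-- Z ⊗ I does not lie in the span W. -/
theorem stmt_11 (d : ℕ) (hd : 2 ≤ d) :
    Zmat d ⊗ₖ (1 : Matrix (Fin d) (Fin d) ℂ) ∉ Wspan d := by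
  set w : ℂ := Complex.exp (2 * Real.pi * Complex.I / d) with hw
  have hd0 : d ≠ 0 := by omega
  have hprim : IsPrimitiveRoot w d := by
    have := Complex.isPrimitiveRoot_exp d hd0
    simpa using this
  have hwd : w ^ d = 1 := hprim.pow_eq_one
  have hx1 : w ^ (d - 1) ≠ 1 :=
    hprim.pow_ne_one_of_pos_of_lt (by omega) (by omega)
  -- the coefficient sum for I ⊗ M is 0
  have hsum0 : (∑ j : Fin d, w ^ ((d - 1) * (j : ℕ))) = 0 := by
    have : (∑ j : Fin d, w ^ ((d - 1) * (j : ℕ)))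
        = ∑ i ∈ Finset.range d, (w ^ (d - 1)) ^ i := by
      simp only [pow_mul]
      exact Fin.sum_univ_eq_sum_range (fun i => (w ^ (d - 1)) ^ i) d
    rw [this, geom_sum_eq hx1]
    have : (w ^ (d - 1)) ^ d = 1 := by
      rw [← pow_mul, mul_comm, pow_mul, hwd, one_pow]
    rw [this]
    simp
  intro hmem
  have hker : Wspan d ≤ LinearMap.ker (phiMap d) := by
    rw [Wspan, Submodule.span_le]
    rintro X (⟨M, rfl⟩ | ⟨a, _, _, T, hT, rfl⟩) <;>
      simp only [SetLike.mem_coe, LinearMap.mem_ker, phi_kron]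
    · rw [show (∑ j : Fin d, w ^ ((d - 1) * (j : ℕ)) *
          (1 : Matrix (Fin d) (Fin d) ℂ) j j) = ∑ j : Fin d, w ^ ((d - 1) * (j : ℕ)) from
        Finset.sum_congr rfl fun j _ => by simp [Matrix.one_apply], hsum0, zero_mul]
    · rw [hT, mul_zero]
  have h0 : phiMap d (Zmat d ⊗ₖ (1 : Matrix (Fin d) (Fin d) ℂ)) = 0 :=
    hker hmem
  rw [phi_kron] at h0
  have htr : (1 : Matrix (Fin d) (Fin d) ℂ).trace = (d : ℂ) := by simp
  have hZ : (∑ j : Fin d, w ^ ((d - 1) * (j : ℕ)) * Zmat d j j) = (d : ℂ) := by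
    have : ∀ j : Fin d, w ^ ((d - 1) * (j : ℕ)) * Zmat d j j = 1 := by
      intro j
      simp only [Zmat, Matrix.diagonal_apply_eq, ← hw, ← pow_add]
      have h1 : d - 1 + 1 = d := by omega
      have : (d - 1) * (j : ℕ) + (j : ℕ) = d * (j : ℕ) := by
        calc (d - 1) * (j : ℕ) + (j : ℕ) = ((d - 1) + 1) * (j : ℕ) := by ring
          _ = d * (j : ℕ) := by rw [h1]
      rw [this, pow_mul, hwd, one_pow]
    simp [this]
  rw [hZ, htr] at h0
  have : (d : ℂ) ≠ 0 := Nat.cast_ne_zero.mpr hd0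
  exact this (by
    have := mul_self_eq_zero.mp h0
    exact this)
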